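/- Let X be a countably infinite alphabet and let (X, Y) be random variables with Y taking finitely many values, say #(Y) = N. Then the minimum list-decoding error with list size L satisfies P_e^{(L)}(X|Y) ≥ 1 − ∑_{x=1}^{L·N} P_X↓(x). -/

import Mathlib

noncomputable section

def IsPmf {α : Type*} (p : α → ℝ) : Prop := (∀ x, 0 ≤ p x) ∧ ∑' x, p x = 1

def topSum (p : ℕ → ℝ) (k : ℕ) : ℝ :=
  sSup {t : ℝ | ∃ s : Finset ℕ, s.card = k ∧ t = ∑ x ∈ s, p x}

/-! For each `y` pick a list `s y` of `L` symbols carrying almost all of the top-`L` mass of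
`W y`. The union of these lists has at most `L * N` symbols, and on it the mixture
`∑ y, q y * W y` carries at least `∑ y, q y * ∑ x ∈ s y, W y x`, so the average top-`L` mass of
the conditionals is at most the top-`L * N` mass of the marginal. -/

namespace IsPmf

variable {α : Type*} {p : α → ℝ}

theorem summable (hp : IsPmf p) : Summable p := by
  by_contra h
  simpa [tsum_eq_zero_of_not_summable h] using hp.2

theorem sum_le_one (hp : IsPmf p) (s : Finset α) : ∑ x ∈ s, p x ≤ 1 :=
  (hp.summable.sum_le_tsum s fun x _ => hp.1 x).trans_eq hp.2

theorem sum_univ_eq_one [Fintype α] (hp : IsPmf p) : ∑ x, p x = 1 := by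
  rw [← tsum_fintype (L := SummationFilter.unconditional α)]
  exact hp.2

theorem mixture {β : Type*} [Fintype β] {q : β → ℝ} {W : β → α → ℝ} (hq : IsPmf q)
    (hW : ∀ y, IsPmf (W y)) : IsPmf fun x => ∑' y, q y * W y x := by
  refine ⟨fun x => tsum_nonneg fun y => mul_nonneg (hq.1 y) ((hW y).1 x), ?_⟩
  simp_rw [tsum_fintype (L := SummationFilter.unconditional β)]
  rw [Summable.tsum_finsetSum fun y _ => (hW y).summable.mul_left (q y)]
  simp_rw [tsum_mul_left, (hW _).2, mul_one]
  exact hq.sum_univ_eq_one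

end IsPmf

theorem topSum_bddAbove {p : ℕ → ℝ} (hp : IsPmf p) (k : ℕ) :
    BddAbove {t : ℝ | ∃ s : Finset ℕ, s.card = k ∧ t = ∑ x ∈ s, p x} := by
  refine ⟨1, ?_⟩
  rintro t ⟨s, -, rfl⟩
  exact hp.sum_le_one s

theorem IsPmf.sum_le_topSum {p : ℕ → ℝ} (hp : IsPmf p) {s : Finset ℕ} {k : ℕ}
    (hs : s.card ≤ k) : ∑ x ∈ s, p x ≤ topSum p k := by
  obtain ⟨t, hst, htk⟩ := Infinite.exists_superset_card_eq s k hs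
  calc ∑ x ∈ s, p x ≤ ∑ x ∈ t, p x :=
        Finset.sum_le_sum_of_subset_of_nonneg hst fun x _ _ => hp.1 x
    _ ≤ topSum p k := le_csSup (topSum_bddAbove hp k) ⟨t, htk, rfl⟩

theorem exists_card_eq_topSum_lt_sum_add (p : ℕ → ℝ) (k : ℕ) {ε : ℝ} (hε : 0 < ε) :
    ∃ s : Finset ℕ, s.card = k ∧ topSum p k < ∑ x ∈ s, p x + ε := by
  obtain ⟨t, ⟨s, hs, rfl⟩, hlt⟩ :=
    exists_lt_of_lt_csSup (s := {t : ℝ | ∃ s : Finset ℕ, s.card = k ∧ t = ∑ x ∈ s, p x})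
      ⟨_, Finset.range k, Finset.card_range k, rfl⟩ (sub_lt_self (topSum p k) hε)
  exact ⟨s, hs, by linarith⟩

section Mixture

variable {β : Type*} [Fintype β] {q : β → ℝ} {W : β → ℕ → ℝ}

theorem sum_mul_sum_le_topSum_mixture (hq : IsPmf q) (hW : ∀ y, IsPmf (W y)) {L : ℕ}
    (s : β → Finset ℕ) (hs : ∀ y, (s y).card ≤ L) :
    ∑ y, q y * ∑ x ∈ s y, W y x ≤
      topSum (fun x => ∑' y, q y * W y x) (L * Fintype.card β) := by
  set S := Finset.univ.biUnion s
  have hS : S.card ≤ L * Fintype.card β :=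
    calc S.card ≤ ∑ y, (s y).card := Finset.card_biUnion_le
      _ ≤ ∑ _y : β, L := Finset.sum_le_sum fun y _ => hs y
      _ = L * Fintype.card β := by simp [mul_comm]
  calc ∑ y, q y * ∑ x ∈ s y, W y x ≤ ∑ y, q y * ∑ x ∈ S, W y x := by
        refine Finset.sum_le_sum fun y _ => mul_le_mul_of_nonneg_left ?_ (hq.1 y)
        exact Finset.sum_le_sum_of_subset_of_nonneg (Finset.subset_biUnion_of_mem s
          (Finset.mem_univ y)) fun x _ _ => (hW y).1 x
    _ = ∑ x ∈ S, ∑' y, q y * W y x := by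
        simp_rw [tsum_fintype (L := SummationFilter.unconditional β), Finset.mul_sum]
        exact Finset.sum_comm
    _ ≤ _ := (hq.mixture hW).sum_le_topSum hS

theorem sum_mul_topSum_le_topSum_mixture (hq : IsPmf q) (hW : ∀ y, IsPmf (W y)) (L : ℕ) :
    ∑ y, q y * topSum (W y) L ≤
      topSum (fun x => ∑' y, q y * W y x) (L * Fintype.card β) := by
  refine le_of_forall_pos_le_add fun ε hε => ?_
  choose s hs hlt using fun y => exists_card_eq_topSum_lt_sum_add (W y) L hε
  calc ∑ y, q y * topSum (W y) L ≤ ∑ y, q y * (∑ x ∈ s y, W y x + ε) :=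
        Finset.sum_le_sum fun y _ => mul_le_mul_of_nonneg_left (hlt y).le (hq.1 y)
    _ = ∑ y, q y * ∑ x ∈ s y, W y x + ε := by
        simp only [mul_add, Finset.sum_add_distrib, ← Finset.sum_mul, hq.sum_univ_eq_one, one_mul]
    _ ≤ _ := by
        gcongr
        exact sum_mul_sum_le_topSum_mixture hq hW s fun y => (hs y).le

end Mixture

theorem stmt_19_general {β : Type*} [Fintype β] (L : ℕ)
    (q : β → ℝ) (W : β → ℕ → ℝ) (hq : IsPmf q) (hW : ∀ y, IsPmf (W y)) :
    1 - topSum (fun x => ∑' y, q y * W y x) (L * Fintype.card β) ≤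
      1 - ∑' y, q y * topSum (W y) L := by
  rw [tsum_fintype]
  exact sub_le_sub_left (sum_mul_topSum_le_topSum_mixture hq hW L) 1

/-- If the side-information alphabet `Y = β` is finite with `N` elements, the
minimum list-decoding error with list size `L`, namely
`P_e^{(L)}(X|Y) = 1 − ∑_y P_Y(y) ∑_{x=1}^L P_{X|Y=y}↓(x)`, is at least
`1 − ∑_{x=1}^{L·N} P_X↓(x)`. -/
theorem stmt_19 {β : Type*} [Fintype β] (L : ℕ) (hL : 1 ≤ L)
    (q : β → ℝ) (W : β → ℕ → ℝ) (hq : IsPmf q) (hW : ∀ y, IsPmf (W y)) :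
    1 - topSum (fun x => ∑' y, q y * W y x) (L * Fintype.card β) ≤
      1 - ∑' y, q y * topSum (W y) L :=
  stmt_19_general L q W hq hW
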